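/- arXiv:1409.7240 — 2 statements merged into one kernel-verified Lean document; each statement's English description precedes it below -/
import Mathlib

section
/- Let G be a finite simple graph whose edge set is partitioned into regions E_1, …, E_k, let V_s be a skeleton set (a set of vertices containing every boundary vertex of the partition), and let G_s be the associated skeleton graph. Let e be an edge of G with e ∈ E_j, let G′ = G − e be equipped with the region partition E_1, …, E_j ∖ {e}, …, E_k and the same skeleton set V_s, and let G′_s be the skeleton graph of G′. Then the number of connected components of G′_s is strictly greater than the number of connected components of G_s if and only if e is a bridge of G and there exist two vertices u, w ∈ V_s ∩ V(R_j) that are connected in the region graph R_j but not connected in R_j − e. -/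
/-- The region graph `R_i`: the graph on the full vertex set `V` whose edges are the
edges of the part `E i`. -/
def regG {V : Type*} {k : ℕ} (E : Fin k → Set (Sym2 V)) (i : Fin k) : SimpleGraph V :=
  SimpleGraph.fromEdgeSet (E i)

/-- The vertex type of the skeleton graph: skeleton vertices (elements of `Vs`)
together with one auxiliary vertex for each pair `(i, group)`, a group being a
nonempty equivalence class of `Vs ∩ V(R i)` under connectivity in `R i` (encoded by
the connected component of `R i` containing the group). -/
def SkelV {V : Type*} {k : ℕ} (E : Fin k → Set (Sym2 V)) (Vs : Set V) : Type _ :=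
  {x : V ⊕ (Σ i : Fin k, (regG E i).ConnectedComponent) //
    Sum.elim (· ∈ Vs)
      (fun p => ∃ v ∈ Vs, v ∈ (regG E p.1).support ∧
        (regG E p.1).connectedComponentMk v = p.2) x}

/-- The skeleton graph: each auxiliary vertex `(i, c)` is joined to every vertex of
its group, i.e. to every `v ∈ Vs` with `v ∈ V(R i)` lying in the component `c`
of `R i`. -/
def skelGraph {V : Type*} {k : ℕ} (E : Fin k → Set (Sym2 V)) (Vs : Set V) :
    SimpleGraph (SkelV E Vs) where
  Adj x y :=
    (∃ (v : V) (i : Fin k) (c : (regG E i).ConnectedComponent),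
      x.1 = Sum.inl v ∧ y.1 = Sum.inr ⟨i, c⟩ ∧
      v ∈ (regG E i).support ∧ (regG E i).connectedComponentMk v = c) ∨
    (∃ (v : V) (i : Fin k) (c : (regG E i).ConnectedComponent),
      y.1 = Sum.inl v ∧ x.1 = Sum.inr ⟨i, c⟩ ∧
      v ∈ (regG E i).support ∧ (regG E i).connectedComponentMk v = c)
  symm := ⟨fun x y h => h.elim Or.inr Or.inl⟩
  loopless := by
    constructor
    rintro x (⟨v, i, c, h1, h2, -, -⟩ | ⟨v, i, c, h1, h2, -, -⟩) <;>
      · rw [h1] at h2; simp at h2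

/-!
Two vertices of `V_s` lie in the same component of the skeleton graph iff they are joined by a
chain of vertices of `V_s` in which consecutive ones share a component of some region graph.
A walk in `G` changes region only at boundary vertices, which lie in `V_s`, so this happens iff
they are connected in `G`. As every component of `G_s` contains a vertex of `V_s`, the
components of `G_s` (resp. `G'_s`) are the classes of `V_s` under connectivity in `G`
(resp. `G − e`), and the count grows iff deleting `e` separates two vertices of `V_s`.

If `e = ab` separates `u, w`, every `u`–`w` walk crosses `e`, so `a` and `b` are not joined in
`G − e`. If moreover no two vertices of `V_s ∩ V(R_j)` were separated in `R_j − e`, every link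
of the chain joining `u` and `w` would survive in a region graph of `G′`, so `u` and `w` would
stay connected in `G − e`. Conversely, two such vertices separated in `R_j − e` are joined in
`R_j − e` to `a` and `b` respectively, so they are separated in `G − e` when `e` is a bridge.
-/

open SimpleGraph Relation

section Bridges

variable {V : Type*} {G H : SimpleGraph V} {a b u w : V}

theorem SimpleGraph.Reachable.deleteEdges_or (h : H.Reachable u w) (a b : V) :
    (H.deleteEdges {s(a, b)}).Reachable u w ∨
      (H.deleteEdges {s(a, b)}).Reachable u a ∧ (H.deleteEdges {s(a, b)}).Reachable b w ∨
      (H.deleteEdges {s(a, b)}).Reachable u b ∧ (H.deleteEdges {s(a, b)}).Reachable a w := by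
  obtain ⟨p⟩ := h
  induction p with
  | nil => exact Or.inl .rfl
  | @cons u x w hux _ ih =>
    by_cases he : s(u, x) = s(a, b)
    · rcases Sym2.eq_iff.mp he with ⟨rfl, rfl⟩ | ⟨rfl, rfl⟩ <;>
        rcases ih with h | ⟨h₁, h₂⟩ | ⟨h₁, h₂⟩
      · exact Or.inr (Or.inl ⟨.rfl, h⟩)
      · exact Or.inl (h₁.symm.trans h₂)
      · exact Or.inl h₂
      · exact Or.inr (Or.inr ⟨.rfl, h⟩)
      · exact Or.inl h₂
      · exact Or.inl (h₁.symm.trans h₂)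
    · have hux' : (H.deleteEdges {s(a, b)}).Adj u x := by simp [hux, he]
      rcases ih with h | ⟨h₁, h₂⟩ | ⟨h₁, h₂⟩
      · exact Or.inl (hux'.reachable.trans h)
      · exact Or.inr (Or.inl ⟨hux'.reachable.trans h₁, h₂⟩)
      · exact Or.inr (Or.inr ⟨hux'.reachable.trans h₁, h₂⟩)

theorem SimpleGraph.isBridge_of_reachable_of_not_reachable_deleteEdges (hr : G.Reachable u w)
    (hn : ¬ (G.deleteEdges {s(a, b)}).Reachable u w) : G.IsBridge s(a, b) := by
  intro hab
  rcases hr.deleteEdges_or a b with h | ⟨h₁, h₂⟩ | ⟨h₁, h₂⟩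
  · exact hn h
  · exact hn ((h₁.trans hab).trans h₂)
  · exact hn ((h₁.trans hab.symm).trans h₂)

theorem SimpleGraph.IsBridge.not_reachable_deleteEdges_of_le (hb : G.IsBridge s(a, b))
    (hHG : H ≤ G) (hr : H.Reachable u w) (hn : ¬ (H.deleteEdges {s(a, b)}).Reachable u w) :
    ¬ (G.deleteEdges {s(a, b)}).Reachable u w := by
  intro huw
  have hle := deleteEdges_mono (s := {s(a, b)}) hHG
  rcases hr.deleteEdges_or a b with h | ⟨h₁, h₂⟩ | ⟨h₁, h₂⟩
  · exact hn h
  · exact hb (((h₁.mono hle).symm.trans huw).trans (h₂.mono hle).symm)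
  · exact hb ((h₂.mono hle).trans (huw.symm.trans (h₁.mono hle)))

end Bridges

theorem Setoid.card_quotient_lt_card_quotient_iff {α : Type*} [Finite α] {r s : Setoid α}
    (h : r ≤ s) : Nat.card (Quotient s) < Nat.card (Quotient r) ↔ ¬ s ≤ r := by
  have hsurj : Function.Surjective (Setoid.map_of_le h) := by
    rintro ⟨a⟩
    exact ⟨Quot.mk _ a, rfl⟩
  have hinj : Function.Injective (Setoid.map_of_le h) ↔ s ≤ r := by
    refine ⟨fun hi a b hab => Quotient.exact (hi (Quotient.sound hab)), ?_⟩
    rintro hsr ⟨a⟩ ⟨b⟩ hab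
    exact Quotient.sound (hsr (Quotient.exact hab))
  rw [← hinj, (Nat.card_le_card_of_surjective _ hsurj).lt_iff_ne, ne_comm, not_iff_not,
    ← (and_iff_right hsurj : _ ∧ Nat.card _ = _ ↔ _), ← Nat.bijective_iff_surjective_and_card,
    Function.Bijective, and_iff_left hsurj]

section Skeleton

variable {V : Type*} {k : ℕ} {E : Fin k → Set (Sym2 V)} {Vs : Set V}

def IsBoundaryVertex (E : Fin k → Set (Sym2 V)) (v : V) : Prop :=
  ∃ i j, i ≠ j ∧ (∃ e ∈ E i, v ∈ e) ∧ (∃ e' ∈ E j, v ∈ e')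

theorem IsBoundaryVertex.mono {E' : Fin k → Set (Sym2 V)} (hE : ∀ i, E' i ⊆ E i) {v : V}
    (hv : IsBoundaryVertex E' v) : IsBoundaryVertex E v := by
  obtain ⟨i, j, hij, ⟨e, he, hve⟩, ⟨e', he', hve'⟩⟩ := hv
  exact ⟨i, j, hij, ⟨e, hE i he, hve⟩, ⟨e', hE j he', hve'⟩⟩

variable (E Vs) in
def regionRel (u w : Vs) : Prop := ∃ i, (regG E i).Reachable u w

variable (E) in
def skelInl (u : Vs) : SkelV E Vs := ⟨Sum.inl u, u.2⟩

noncomputable def skelAnchor : SkelV E Vs → Vs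
  | ⟨Sum.inl v, hv⟩ => ⟨v, hv⟩
  | ⟨Sum.inr _, h⟩ => ⟨h.choose, h.choose_spec.1⟩

theorem regionRel_skelAnchor_of_adj {x y : SkelV E Vs} (h : (skelGraph E Vs).Adj x y) :
    regionRel E Vs (skelAnchor x) (skelAnchor y) := by
  obtain ⟨x, hx⟩ := x
  obtain ⟨y, hy⟩ := y
  rcases h with ⟨v, i, c, rfl, rfl, -, hv⟩ | ⟨v, i, c, rfl, rfl, -, hv⟩
  · exact ⟨i, ConnectedComponent.exact (hv.trans hy.choose_spec.2.2.symm)⟩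
  · exact ⟨i, ConnectedComponent.exact (hx.choose_spec.2.2.trans hv.symm)⟩

theorem reachable_skelInl_skelAnchor (x : SkelV E Vs) :
    (skelGraph E Vs).Reachable (skelInl E (skelAnchor x)) x := by
  obtain ⟨x | ⟨i, c⟩, hx⟩ := x
  · exact .rfl
  · exact Adj.reachable (Or.inl ⟨_, i, c, rfl, rfl, hx.choose_spec.2⟩)

theorem reachable_skelInl_of_regionRel {u w : Vs} (h : regionRel E Vs u w) :
    (skelGraph E Vs).Reachable (skelInl E u) (skelInl E w) := by
  obtain ⟨i, h⟩ := h
  by_cases huw : (u : V) = w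
  · rw [Subtype.ext huw]
  have hu := mem_support_of_reachable huw h
  let aux : SkelV E Vs := ⟨Sum.inr ⟨i, (regG E i).connectedComponentMk u⟩, u, u.2, hu, rfl⟩
  have hua : (skelGraph E Vs).Adj (skelInl E u) aux := Or.inl ⟨u, i, _, rfl, rfl, hu, rfl⟩
  have hwa : (skelGraph E Vs).Adj (skelInl E w) aux :=
    Or.inl ⟨w, i, _, rfl, rfl, mem_support_of_reachable (Ne.symm huw) h.symm,
      ConnectedComponent.sound h.symm⟩
  exact hua.reachable.trans hwa.reachable.symm

theorem reachable_skelInl_iff {u w : Vs} :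
    (skelGraph E Vs).Reachable (skelInl E u) (skelInl E w) ↔
      ReflTransGen (regionRel E Vs) u w := by
  refine ⟨fun h => ?_, fun h => ?_⟩
  · rw [reachable_iff_reflTransGen] at h
    exact h.lift skelAnchor fun _ _ => regionRel_skelAnchor_of_adj
  · induction h with
    | refl => exact .rfl
    | tail _ h ih => exact ih.trans (reachable_skelInl_of_regionRel h)

variable {G : SimpleGraph V}

theorem regG_le (hunion : ⋃ i, E i = G.edgeSet) (i : Fin k) : regG E i ≤ G := fun _ _ h => by
  rw [← mem_edgeSet, ← hunion]
  exact Set.mem_iUnion_of_mem i ((fromEdgeSet_adj _).mp h).1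

theorem reachable_of_reflTransGen_regionRel (hunion : ⋃ i, E i = G.edgeSet) {u w : Vs}
    (h : ReflTransGen (regionRel E Vs) u w) : G.Reachable u w := by
  induction h with
  | refl => exact .rfl
  | tail _ h ih =>
    obtain ⟨i, h⟩ := h
    exact ih.trans (h.mono (regG_le hunion i))

theorem reflTransGen_regionRel_of_walk (hunion : ⋃ i, E i = G.edgeSet)
    (hVs : ∀ v, IsBoundaryVertex E v → v ∈ Vs) {x w : V} (p : G.Walk x w) (hw : w ∈ Vs)
    (u : Vs) (hux : (u : V) = x ∨ ∃ i, (regG E i).Reachable u x) :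
    ReflTransGen (regionRel E Vs) u ⟨w, hw⟩ := by
  induction p generalizing u with
  | nil =>
    rcases hux with hux | hux
    · obtain rfl : u = ⟨_, hw⟩ := Subtype.ext hux
      exact .refl
    · exact .single hux
  | @cons x y w hxy _ ih =>
    obtain ⟨i', hi'⟩ := Set.mem_iUnion.mp (hunion ▸ hxy : s(x, y) ∈ ⋃ i, E i)
    have hxy' : (regG E i').Adj x y := (fromEdgeSet_adj _).mpr ⟨hi', hxy.ne⟩
    by_cases hux' : (u : V) = x
    · exact ih hw u (Or.inr ⟨i', hux' ▸ hxy'.reachable⟩)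
    obtain ⟨i, hi⟩ := hux.resolve_left hux'
    by_cases hii : i = i'
    · exact ih hw u (Or.inr ⟨i, hi.trans (hii ▸ hxy'.reachable)⟩)
    obtain ⟨z, hxz⟩ := mem_support_of_reachable (Ne.symm hux') hi.symm
    -- `x` is where the walk leaves region `i` for region `i'`, so it is a boundary vertex.
    have hx : x ∈ Vs := hVs x ⟨i, i', hii,
      ⟨_, ((fromEdgeSet_adj _).mp hxz).1, Sym2.mem_mk_left _ _⟩, ⟨_, hi', Sym2.mem_mk_left _ _⟩⟩
    exact .head (b := ⟨x, hx⟩) ⟨i, hi⟩ (ih hw ⟨x, hx⟩ (Or.inr ⟨i', hxy'.reachable⟩))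

theorem reflTransGen_regionRel_iff_reachable (hunion : ⋃ i, E i = G.edgeSet)
    (hVs : ∀ v, IsBoundaryVertex E v → v ∈ Vs) {u w : Vs} :
    ReflTransGen (regionRel E Vs) u w ↔ G.Reachable u w :=
  ⟨reachable_of_reflTransGen_regionRel hunion,
    fun ⟨p⟩ => reflTransGen_regionRel_of_walk hunion hVs p w.2 u (Or.inl rfl)⟩

theorem card_connectedComponent_skelGraph (hunion : ⋃ i, E i = G.edgeSet)
    (hVs : ∀ v, IsBoundaryVertex E v → v ∈ Vs) :
    Nat.card (skelGraph E Vs).ConnectedComponent =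
      Nat.card (Quotient (G.reachableSetoid.comap ((↑) : Vs → V))) := by
  let f (u : Vs) := (skelGraph E Vs).connectedComponentMk (skelInl E u)
  have hf : Function.Surjective f := by
    rintro ⟨x⟩
    exact ⟨skelAnchor x, ConnectedComponent.sound (reachable_skelInl_skelAnchor x)⟩
  have hker : Setoid.ker f = G.reachableSetoid.comap (↑) := by
    ext u w
    rw [Setoid.ker_def, ConnectedComponent.eq, reachable_skelInl_iff,
      reflTransGen_regionRel_iff_reachable hunion hVs, Setoid.comap_rel]
    rfl
  rw [← hker]
  exact Nat.card_congr (Setoid.quotientKerEquivOfSurjective f hf).symm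

variable {e : Sym2 V} {j : Fin k}

theorem regG_sdiff_of_notMem {i : Fin k} (h : e ∉ E i) :
    regG (fun i => E i \ {e}) i = regG E i := by
  simp only [regG, Set.sdiff_singleton_eq_self h]

theorem regG_sdiff_self : regG (fun i => E i \ {e}) j = (regG E j).deleteEdges {e} := by
  ext x y
  simp only [regG, fromEdgeSet_adj, deleteEdges_adj, Set.mem_sdiff, Set.mem_singleton_iff]
  tauto

theorem regionRel_le_regionRel_sdiff (hdisj : ∀ i j, i ≠ j → Disjoint (E i) (E j))
    (he : e ∈ E j)
    (hj : ∀ u w : Vs, (regG E j).Reachable u w → ((regG E j).deleteEdges {e}).Reachable u w) :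
    regionRel E Vs ≤ regionRel (fun i => E i \ {e}) Vs := by
  rintro u w ⟨i, h⟩
  refine ⟨i, ?_⟩
  by_cases hij : i = j
  · subst hij
    exact regG_sdiff_self ▸ hj u w h
  · rwa [regG_sdiff_of_notMem fun hi => Set.disjoint_left.mp (hdisj i j hij) hi he]

theorem iUnion_sdiff_eq_edgeSet_deleteEdges (hunion : ⋃ i, E i = G.edgeSet) :
    ⋃ i, E i \ {e} = (G.deleteEdges {e}).edgeSet := by
  rw [edgeSet_deleteEdges, ← hunion, Set.iUnion_sdiff]

theorem exists_separated_in_region (hunion : ⋃ i, E i = G.edgeSet)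
    (hdisj : ∀ i j, i ≠ j → Disjoint (E i) (E j))
    (hVs : ∀ v, IsBoundaryVertex E v → v ∈ Vs) (he : e ∈ E j) {u w : Vs}
    (hr : G.Reachable u w) (hn : ¬ (G.deleteEdges {e}).Reachable u w) :
    ∃ u ∈ Vs, ∃ w ∈ Vs, u ∈ (regG E j).support ∧ w ∈ (regG E j).support ∧
      (regG E j).Reachable u w ∧ ¬ ((regG E j).deleteEdges {e}).Reachable u w := by
  by_contra! hj
  refine hn ((reflTransGen_regionRel_iff_reachable (iUnion_sdiff_eq_edgeSet_deleteEdges hunion)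
    fun v hv => hVs v (hv.mono fun _ => Set.sdiff_subset)).mp ?_)
  refine ReflTransGen.mono (regionRel_le_regionRel_sdiff hdisj he fun u' w' h => ?_)
    _ _ ((reflTransGen_regionRel_iff_reachable hunion hVs).mpr hr)
  by_cases huw : (u' : V) = w'
  · exact huw ▸ .rfl
  · exact hj u' u'.2 w' w'.2 (mem_support_of_reachable huw h)
      (mem_support_of_reachable (Ne.symm huw) h.symm) h

end Skeleton

/-- With `G`, a region partition `E`, a skeleton set `Vs` and the
skeleton graph as before, let `e ∈ E j` be an edge of `G` and equip
`G' = G − e` with the partition `fun i => E i \ {e}` (which removes `e` from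
`E j` and leaves the other parts unchanged, by disjointness) and the same skeleton
set.  Then the skeleton graph of `G'` has strictly more connected components than
the skeleton graph of `G` iff `e` is a bridge of `G` and some two vertices of
`Vs ∩ V(R j)` are connected in the region graph `R j` but not in `R j − e`. -/
theorem stmt7 {V : Type*} [Fintype V] (G : SimpleGraph V) {k : ℕ}
    (E : Fin k → Set (Sym2 V))
    (hunion : ⋃ i, E i = G.edgeSet)
    (hdisj : ∀ i j, i ≠ j → Disjoint (E i) (E j))
    (Vs : Set V)
    (hVs : ∀ v : V,
      (∃ i j, i ≠ j ∧ (∃ e ∈ E i, v ∈ e) ∧ (∃ e' ∈ E j, v ∈ e')) → v ∈ Vs)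
    (j : Fin k) (e : Sym2 V) (he : e ∈ E j) :
    Nat.card (skelGraph (fun i => E i \ {e}) Vs).ConnectedComponent >
      Nat.card (skelGraph E Vs).ConnectedComponent ↔
    ((e ∈ G.edgeSet ∧ G.IsBridge e) ∧
      ∃ u ∈ Vs, ∃ w ∈ Vs, u ∈ (regG E j).support ∧ w ∈ (regG E j).support ∧
        (regG E j).Reachable u w ∧
        ¬ ((regG E j).deleteEdges {e}).Reachable u w) := by
  rw [gt_iff_lt, card_connectedComponent_skelGraph hunion hVs,
    card_connectedComponent_skelGraph (iUnion_sdiff_eq_edgeSet_deleteEdges hunion)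
      fun v hv => hVs v (hv.mono fun _ => Set.sdiff_subset),
    Setoid.card_quotient_lt_card_quotient_iff
      fun _ _ (h : (G.deleteEdges {e}).Reachable _ _) => h.mono (deleteEdges_le _)]
  simp only [Setoid.le_def, Setoid.comap_rel, not_forall]
  induction e using Sym2.ind with | _ a b =>
  constructor
  · rintro ⟨u, w, hr, hn⟩
    exact ⟨⟨hunion ▸ Set.mem_iUnion_of_mem j he,
      isBridge_of_reachable_of_not_reachable_deleteEdges hr hn⟩,
      exists_separated_in_region hunion hdisj hVs he hr hn⟩
  · rintro ⟨⟨-, hb⟩, u, hu, w, hw, -, -, hr, hn⟩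
    exact ⟨⟨u, hu⟩, ⟨w, hw⟩, hr.mono (regG_le hunion j),
      hb.not_reachable_deleteEdges_of_le (regG_le hunion j) hr hn⟩
end

section
/- Let G be a finite simple graph whose edge set is partitioned into regions E_1, …, E_k, let V_s be a skeleton set (a set of vertices containing every boundary vertex of the partition), and let G_s be the associated skeleton graph. If every vertex of G is incident to edges of at most c different parts of the partition, then G_s has at most c · |V_s| auxiliary vertices (hence at most (1 + c) · |V_s| vertices in total) and at most c · |V_s| edges. -/
/-! Each auxiliary vertex of the skeleton graph is `(i, [v]ᵢ)` and each of its edges is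
`{v, (i, [v]ᵢ)}`, for a skeleton vertex `v` of the region graph `R i` with component `[v]ᵢ`.
So both are images of the incidences `(v, i)`, of which each `v ∈ Vs` has at most `c`. -/

theorem exists_mem_of_mem_support_regG {V : Type*} {k : ℕ} (E : Fin k → Set (Sym2 V))
    {i : Fin k} {v : V} (hv : v ∈ (regG E i).support) : ∃ e ∈ E i, v ∈ e := by
  obtain ⟨w, hvw⟩ := hv
  exact ⟨s(v, w), hvw.1, Sym2.mem_mk_left v w⟩

namespace SkelV

variable {V : Type*} {k : ℕ} (E : Fin k → Set (Sym2 V)) (Vs : Set V)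

instance [Finite V] : Finite (SkelV E Vs) := Subtype.finite

abbrev Aux : Type _ := {x : SkelV E Vs // ∃ p, x.1 = Sum.inr p}

abbrev Incidence : Type _ := Σ v : Vs, {i : Fin k // (v : V) ∈ (regG E i).support}

def skel (v : Vs) : SkelV E Vs := ⟨Sum.inl v, v.2⟩

def aux (v : Vs) (i : Fin k) (hv : (v : V) ∈ (regG E i).support) : SkelV E Vs :=
  ⟨Sum.inr ⟨i, (regG E i).connectedComponentMk v⟩, v, v.2, hv, rfl⟩

theorem sumElim_skel_val_surjective :
    Function.Surjective (Sum.elim (skel E Vs) Subtype.val : Vs ⊕ Aux E Vs → SkelV E Vs) := by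
  rintro ⟨v | p, hx⟩
  · exact ⟨Sum.inl ⟨v, hx⟩, rfl⟩
  · exact ⟨Sum.inr ⟨⟨Sum.inr p, hx⟩, p, rfl⟩, rfl⟩

theorem card_le_ncard_add_card_aux [Finite V] :
    Nat.card (SkelV E Vs) ≤ Vs.ncard + Nat.card (Aux E Vs) := by
  simpa [Nat.card_sum] using Nat.card_le_card_of_surjective _ (sumElim_skel_val_surjective E Vs)

variable {E Vs} in
theorem skelGraph_adj_skel_aux (v : Vs) (i : Fin k)
    (hv : (v : V) ∈ (regG E i).support) : (skelGraph E Vs).Adj (skel E Vs v) (aux E Vs v i hv) :=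
  Or.inl ⟨v, i, _, rfl, rfl, hv, rfl⟩

def Incidence.toAux (p : Incidence E Vs) : Aux E Vs :=
  ⟨aux E Vs p.1 p.2.1 p.2.2, _, rfl⟩

def Incidence.toEdge (p : Incidence E Vs) : (skelGraph E Vs).edgeSet :=
  ⟨s(skel E Vs p.1, aux E Vs p.1 p.2.1 p.2.2), skelGraph_adj_skel_aux p.1 p.2.1 p.2.2⟩

theorem Incidence.toAux_surjective : Function.Surjective (Incidence.toAux E Vs) := by
  rintro ⟨⟨x, hx⟩, ⟨i, C⟩, hq : x = _⟩
  subst hq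
  obtain ⟨v, hv, hsupp, hC⟩ := hx
  exact ⟨⟨⟨v, hv⟩, i, hsupp⟩, by simp [toAux, aux, hC]⟩

variable {E Vs} in
theorem exists_incidence_of_adj {x y : SkelV E Vs} (h : (skelGraph E Vs).Adj x y) :
    ∃ p : Incidence E Vs, (Incidence.toEdge E Vs p : Sym2 (SkelV E Vs)) = s(x, y) := by
  obtain ⟨v, i, _, hx, hy, hsupp, rfl⟩ | ⟨v, i, _, hy, hx, hsupp, rfl⟩ := h
  · have hv : v ∈ Vs := by simpa [hx] using x.2
    obtain rfl : x = skel E Vs ⟨v, hv⟩ := Subtype.ext hx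
    obtain rfl : y = aux E Vs ⟨v, hv⟩ i hsupp := Subtype.ext hy
    exact ⟨⟨⟨v, hv⟩, i, hsupp⟩, rfl⟩
  · have hv : v ∈ Vs := by simpa [hy] using y.2
    obtain rfl : y = skel E Vs ⟨v, hv⟩ := Subtype.ext hy
    obtain rfl : x = aux E Vs ⟨v, hv⟩ i hsupp := Subtype.ext hx
    exact ⟨⟨⟨v, hv⟩, i, hsupp⟩, Sym2.eq_swap⟩

theorem Incidence.toEdge_surjective : Function.Surjective (Incidence.toEdge E Vs) := by
  rintro ⟨e, he⟩
  induction e using Sym2.ind with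
  | _ x y =>
    obtain ⟨p, hp⟩ := exists_incidence_of_adj he
    exact ⟨p, Subtype.ext hp⟩

theorem card_incidence_le [Finite V] {c : ℕ}
    (hc : ∀ v : V, {i : Fin k | ∃ e ∈ E i, v ∈ e}.ncard ≤ c) :
    Nat.card (Incidence E Vs) ≤ c * Vs.ncard := by
  have : Fintype Vs := Fintype.ofFinite Vs
  have hfiber (v : Vs) : Nat.card {i : Fin k // (v : V) ∈ (regG E i).support} ≤ c :=
    calc Nat.card {i : Fin k // (v : V) ∈ (regG E i).support}
        ≤ {i : Fin k | ∃ e ∈ E i, (v : V) ∈ e}.ncard :=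
          Set.ncard_le_ncard fun _ => exists_mem_of_mem_support_regG E
      _ ≤ c := hc v
  calc Nat.card (Incidence E Vs) ≤ Fintype.card Vs • c := by
        rw [Nat.card_sigma]; exact Finset.sum_le_card_nsmul _ _ _ fun v _ => hfiber v
    _ = c * Vs.ncard := by
        rw [smul_eq_mul, ← Nat.card_eq_fintype_card, Nat.card_coe_set_eq, mul_comm]

end SkelV

theorem stmt10_general {V : Type*} [Fintype V] {k : ℕ}
    (E : Fin k → Set (Sym2 V))
    (Vs : Set V)
    (c : ℕ)
    (hc : ∀ v : V, {i : Fin k | ∃ e ∈ E i, v ∈ e}.ncard ≤ c) :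
    Nat.card {x : SkelV E Vs // ∃ p, x.1 = Sum.inr p} ≤ c * Vs.ncard ∧
    Nat.card (SkelV E Vs) ≤ (1 + c) * Vs.ncard ∧
    (skelGraph E Vs).edgeSet.ncard ≤ c * Vs.ncard := by
  have hinc := SkelV.card_incidence_le E Vs hc
  have haux : Nat.card (SkelV.Aux E Vs) ≤ c * Vs.ncard :=
    (Nat.card_le_card_of_surjective _ (SkelV.Incidence.toAux_surjective E Vs)).trans hinc
  refine ⟨haux, ?_, ?_⟩
  · calc Nat.card (SkelV E Vs) ≤ Vs.ncard + Nat.card (SkelV.Aux E Vs) :=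
          SkelV.card_le_ncard_add_card_aux E Vs
      _ ≤ (1 + c) * Vs.ncard := by linarith
  · rw [← Nat.card_coe_set_eq]
    exact (Nat.card_le_card_of_surjective _ (SkelV.Incidence.toEdge_surjective E Vs)).trans hinc

/-- With `G`, a region partition `E` and a skeleton set `Vs`
(containing all boundary vertices) as before, if every vertex of `G` is incident
to edges of at most `c` different parts, then the skeleton graph has at most
`c * |Vs|` auxiliary vertices, hence at most `(1 + c) * |Vs|` vertices in total,
and at most `c * |Vs|` edges. -/
theorem stmt10 {V : Type*} [Fintype V] (G : SimpleGraph V) {k : ℕ}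
    (E : Fin k → Set (Sym2 V))
    (hunion : ⋃ i, E i = G.edgeSet)
    (hdisj : ∀ i j, i ≠ j → Disjoint (E i) (E j))
    (Vs : Set V)
    (hVs : ∀ v : V,
      (∃ i j, i ≠ j ∧ (∃ e ∈ E i, v ∈ e) ∧ (∃ e' ∈ E j, v ∈ e')) → v ∈ Vs)
    (c : ℕ)
    (hc : ∀ v : V, {i : Fin k | ∃ e ∈ E i, v ∈ e}.ncard ≤ c) :
    Nat.card {x : SkelV E Vs // ∃ p, x.1 = Sum.inr p} ≤ c * Vs.ncard ∧
    Nat.card (SkelV E Vs) ≤ (1 + c) * Vs.ncard ∧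
    (skelGraph E Vs).edgeSet.ncard ≤ c * Vs.ncard :=
  stmt10_general E Vs c hc
end
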